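/- arXiv:1708.05263 — 2 statements merged into one kernel-verified Lean document; each statement's English description precedes it below -/
import Mathlib

section
/- For any natural number k ≥ 1, positive reals n₁,…,n_k, and r > 0, the nested integral ∫₀^r r₁^{n₁-1} ∫₀^{r-r₁} r₂^{n₂-1} ⋯ ∫₀^{r-∑_{i=1}^{k-1} r_i} r_k^{n_k-1} dr_k ⋯ dr₁ equals (r^n / Γ(n+1)) · ∏_{i=1}^k Γ(n_i), where n = n₁ + ⋯ + n_k. -/
open Real

/-- The nested simplex integral `∫₀^r t₁^{a₁-1} ∫₀^{r-t₁} t₂^{a₂-1} ⋯ dt₂ dt₁`,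
defined by recursion on the list of exponents. -/
noncomputable def nestedIntegral : List ℝ → ℝ → ℝ
  | [], _ => 1
  | a :: rest, r => ∫ t in (0:ℝ)..r, t ^ (a - 1) * nestedIntegral rest (r - t)

lemma real_beta_scaled (a b r : ℝ) (ha : 0 < a) (hb : 0 < b) (hr : 0 < r) :
    ∫ t in (0:ℝ)..r, t ^ (a - 1) * (r - t) ^ (b - 1)
      = r ^ (a + b - 1) * (Real.Gamma a * Real.Gamma b / Real.Gamma (a + b)) := by
  have key : ((∫ t in (0:ℝ)..r, t ^ (a - 1) * (r - t) ^ (b - 1) : ℝ) : ℂ)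
      = (r : ℂ) ^ ((a : ℂ) + b - 1) * Complex.betaIntegral a b := by
    rw [← Complex.betaIntegral_scaled a b hr, ← intervalIntegral.integral_ofReal]
    apply intervalIntegral.integral_congr
    intro t ht
    rw [Set.uIcc_of_le hr.le] at ht
    push_cast
    rw [Complex.ofReal_cpow ht.1, Complex.ofReal_cpow (by linarith [ht.2])]
    push_cast
    ring_nf
  have hba : Complex.betaIntegral a b
      = (Real.Gamma a : ℂ) * Real.Gamma b / Real.Gamma (a + b) := by
    have h := Complex.Gamma_mul_Gamma_eq_betaIntegral
      (s := (a : ℂ)) (t := (b : ℂ)) (by simpa using ha) (by simpa using hb)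
    have hne : Complex.Gamma ((a : ℂ) + b) ≠ 0 := by
      rw [show ((a : ℂ) + b) = ((a + b : ℝ) : ℂ) by push_cast; ring, Complex.Gamma_ofReal]
      exact_mod_cast (Real.Gamma_pos_of_pos (by linarith)).ne'
    rw [show ((a : ℂ) + b) = ((a + b : ℝ) : ℂ) by push_cast; ring, Complex.Gamma_ofReal,
      Complex.Gamma_ofReal, Complex.Gamma_ofReal] at h
    rw [eq_div_iff (by rwa [show ((a : ℂ) + b) = ((a + b : ℝ) : ℂ) by push_cast; ring,
      Complex.Gamma_ofReal] at hne)]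
    linear_combination -h
  rw [hba] at key
  have : ((∫ t in (0:ℝ)..r, t ^ (a - 1) * (r - t) ^ (b - 1) : ℝ) : ℂ)
      = ((r ^ (a + b - 1) * (Real.Gamma a * Real.Gamma b / Real.Gamma (a + b)) : ℝ) : ℂ) := by
    rw [key, show ((a : ℂ) + b - 1) = ((a + b - 1 : ℝ) : ℂ) by push_cast; ring,
      ← Complex.ofReal_cpow hr.le]
    push_cast
    ring
  exact_mod_cast this

lemma nestedIntegral_eq (l : List ℝ) (hl : ∀ a ∈ l, 0 < a) :
    ∀ r : ℝ, 0 < r → nestedIntegral l r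
      = r ^ l.sum / Real.Gamma (l.sum + 1) * (l.map Real.Gamma).prod := by
  induction l with
  | nil =>
    intro r hr
    simp [nestedIntegral, Real.Gamma_one, Real.rpow_zero]
  | cons a l ih =>
    intro r hr
    have ha : 0 < a := hl a (by simp)
    have hs : 0 ≤ l.sum := List.sum_nonneg fun x hx => (hl x (by simp [hx])).le
    have step : nestedIntegral (a :: l) r
        = ∫ t in (0:ℝ)..r, t ^ (a - 1) *
            ((r - t) ^ l.sum / Real.Gamma (l.sum + 1) * (l.map Real.Gamma).prod) := by
      rw [nestedIntegral]
      apply intervalIntegral.integral_congr_ae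
      have hmeas : ∀ᵐ t : ℝ, t ≠ r := by
        rw [MeasureTheory.ae_iff]
        simpa using MeasureTheory.measure_singleton r
      filter_upwards [hmeas] with t htr ht
      rw [Set.uIoc_of_le hr.le] at ht
      have hrt : 0 < r - t := lt_of_le_of_ne (by linarith [ht.2]) (by intro h; exact htr (by linarith))
      rw [ih (fun x hx => hl x (by simp [hx])) (r - t) hrt]
    rw [step]
    have hrw : ∀ t : ℝ, t ^ (a - 1) *
            ((r - t) ^ l.sum / Real.Gamma (l.sum + 1) * (l.map Real.Gamma).prod)
        = (1 / Real.Gamma (l.sum + 1) * (l.map Real.Gamma).prod) *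
            (t ^ (a - 1) * (r - t) ^ (l.sum + 1 - 1)) := by
      intro t; ring_nf
    simp_rw [hrw]
    rw [intervalIntegral.integral_const_mul,
      real_beta_scaled a (l.sum + 1) r ha (by linarith) hr]
    have hΓ : Real.Gamma (l.sum + 1) ≠ 0 := (Real.Gamma_pos_of_pos (by linarith)).ne'
    rw [List.sum_cons, List.map_cons, List.prod_cons]
    rw [show a + (l.sum + 1) - 1 = a + l.sum by ring, show a + l.sum + 1 = a + l.sum + 1 by ring]
    field_simp
    ring

theorem nested_simplex_integral (k : ℕ) (hk : 1 ≤ k) (nn : Fin k → ℝ)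
    (hnn : ∀ i, 0 < nn i) (r : ℝ) (hr : 0 < r) :
    nestedIntegral (List.ofFn nn) r
      = r ^ (∑ i, nn i) / Real.Gamma ((∑ i, nn i) + 1) * ∏ i, Real.Gamma (nn i) := by
  have h := nestedIntegral_eq (List.ofFn nn) (by
    intro a ha
    rw [List.mem_ofFn] at ha
    obtain ⟨i, rfl⟩ := ha
    exact hnn i) r hr
  rw [h, List.sum_ofFn, List.map_ofFn, List.prod_ofFn]
  rfl
end

section
/- Let Δ = {δ₁,…,δ_k} be a partition of {1,…,n} with |δ_j| = n_j. The n-dimensional Lebesgue volume of the set H = {x ∈ ℝⁿ : ∑_{δ∈Δ} sqrt(∑_{d∈δ} x_d²) ≤ r} equals (r^n / n!) · ∏_{δ∈Δ} ( n_δ! · π^{n_δ/2} / Γ(n_δ/2 + 1) ). -/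
/-!
The function `x ↦ ∑ δ, ‖x_δ‖₂` is the norm of the ℓ¹-product of the Euclidean spaces `ℝ^δ`,
and for any norm on `ℝⁿ` the volume of the `r`-ball is `rⁿ / n! · ∫ exp (-‖x‖)`. For the
ℓ¹-product this integral factors over the blocks, and the factor of a block of size `k` is `k!`
times the volume `π^(k/2) / Γ(k/2 + 1)` of the Euclidean unit ball in `ℝᵏ`.
-/

open Real MeasureTheory Metric Module

theorem MeasureTheory.Measure.addHaar_closedBall_eq_integral_exp_neg_norm {E : Type*}
    [NormedAddCommGroup E] [NormedSpace ℝ E] [FiniteDimensional ℝ E] [MeasurableSpace E]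
    [BorelSpace E] (μ : Measure E) [μ.IsAddHaarMeasure] {r : ℝ} (hr : 0 ≤ r) :
    μ (closedBall 0 r) =
      .ofReal (r ^ finrank ℝ E / (finrank ℝ E).factorial * ∫ x, exp (-‖x‖) ∂μ) := by
  rw [Measure.addHaar_closedBall μ 0 hr, measure_unitBall_eq_integral_div_gamma μ one_pos,
    ← ENNReal.ofReal_mul (by positivity)]
  simp only [Real.rpow_one, div_one, Real.Gamma_nat_eq_factorial]
  ring_nf

theorem volume_setOf_sum_norm_le {ι : Type*} [Fintype ι] {E : ι → Type*}
    [∀ i, NormedAddCommGroup (E i)] [∀ i, NormedSpace ℝ (E i)] [∀ i, FiniteDimensional ℝ (E i)]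
    [∀ i, MeasureSpace (E i)] [∀ i, BorelSpace (E i)]
    [∀ i, (volume : Measure (E i)).IsAddHaarMeasure] {r : ℝ} (hr : 0 ≤ r) :
    volume {x : ∀ i, E i | ∑ i, ‖x i‖ ≤ r} =
      .ofReal (r ^ (∑ i, finrank ℝ (E i)) / (∑ i, finrank ℝ (E i)).factorial *
        ∏ i, ∫ y, exp (-‖y‖) ∂(volume : Measure (E i))) := by
  let toL1 := (PiLp.continuousLinearEquiv 1 ℝ E).symm
  have hball : {x : ∀ i, E i | ∑ i, ‖x i‖ ≤ r} = toL1 ⁻¹' closedBall 0 r := by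
    ext x
    simp [toL1, PiLp.norm_eq_of_L1]
  have hdim : finrank ℝ (PiLp 1 E) = ∑ i, finrank ℝ (E i) := by
    rw [toL1.toLinearEquiv.finrank_eq.symm, finrank_pi_fintype]
  rw [hball, ← Measure.map_apply toL1.continuous.measurable measurableSet_closedBall,
    Measure.addHaar_closedBall_eq_integral_exp_neg_norm _ hr, hdim,
    integral_map toL1.continuous.aemeasurable (by fun_prop)]
  simp only [toL1, PiLp.norm_eq_of_L1, PiLp.continuousLinearEquiv_symm_apply,
    ← Finset.sum_neg_distrib, exp_sum]
  rw [integral_fintype_prod_volume_eq_prod (fun i y => exp (-‖y‖))]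

theorem EuclideanSpace.integral_exp_neg_norm (ι : Type*) [Fintype ι] :
    ∫ x : EuclideanSpace ℝ ι, exp (-‖x‖) =
      (Fintype.card ι).factorial * π ^ ((Fintype.card ι : ℝ) / 2) /
        Gamma (Fintype.card ι / 2 + 1) := by
  rcases isEmpty_or_nonempty ι with _ | _
  · simp [volume_euclideanSpace_eq_dirac]
  have hball := (volume : Measure (EuclideanSpace ℝ ι)).addHaar_closedBall_eq_integral_exp_neg_norm
    zero_le_one
  rw [EuclideanSpace.volume_closedBall, ENNReal.ofReal_one, one_pow, one_mul,
    ENNReal.ofReal_eq_ofReal_iff (by positivity) (by positivity)] at hball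
  have hsqrt : √π ^ Fintype.card ι = π ^ ((Fintype.card ι : ℝ) / 2) := by
    rw [Real.sqrt_eq_rpow, ← Real.rpow_natCast, ← Real.rpow_mul pi_nonneg]
    ring_nf
  simp only [one_pow, finrank_euclideanSpace, hsqrt] at hball
  rw [mul_div_assoc, hball]
  field_simp

theorem MeasureTheory.measurePreserving_piCurry {ι : Type*} [Fintype ι] {κ : ι → Type*}
    [∀ i, Fintype (κ i)] {X : ∀ i, κ i → Type*} [∀ i j, MeasurableSpace (X i j)]
    (μ : ∀ i j, Measure (X i j)) [∀ i j, SigmaFinite (μ i j)] :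
    MeasurePreserving (MeasurableEquiv.piCurry X) (Measure.pi fun p => μ p.1 p.2)
      (Measure.pi fun i => Measure.pi (μ i)) := by
  refine MeasurePreserving.symm _ ⟨(MeasurableEquiv.piCurry X).symm.measurable, ?_⟩
  refine (Measure.pi_eq fun s _ => ?_).symm
  have hbox : (MeasurableEquiv.piCurry X).symm ⁻¹' Set.univ.pi s =
      Set.univ.pi fun i => Set.univ.pi fun j => s ⟨i, j⟩ := by
    ext x
    simp [MeasurableEquiv.coe_piCurry_symm, Sigma.forall, Sigma.uncurry]
  rw [MeasurableEquiv.map_apply, hbox, Measure.pi_pi]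
  simp_rw [Measure.pi_pi]
  rw [← Finset.univ_sigma_univ, Finset.prod_sigma]

noncomputable def Finset.sigmaEquivOfPartition {α : Type*} (Δ : Finset (Finset α))
    (hdisj : ∀ δ₁ ∈ Δ, ∀ δ₂ ∈ Δ, δ₁ ≠ δ₂ → Disjoint δ₁ δ₂) (hcov : ∀ a : α, ∃ δ ∈ Δ, a ∈ δ) :
    (Σ δ : Δ, (δ : Finset α)) ≃ α :=
  Equiv.ofBijective (fun p => p.2) <| by
    refine ⟨?_, fun a => ?_⟩
    · rintro ⟨⟨δ₁, h₁⟩, a, ha₁⟩ ⟨⟨δ₂, h₂⟩, b, hb₂⟩ (rfl : a = b)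
      obtain rfl : δ₁ = δ₂ := by
        by_contra hne
        exact Finset.disjoint_left.mp (hdisj δ₁ h₁ δ₂ h₂ hne) ha₁ hb₂
      rfl
    · obtain ⟨δ, hδ, ha⟩ := hcov a
      exact ⟨⟨⟨δ, hδ⟩, a, ha⟩, rfl⟩

theorem measurePreserving_restrictBlocks {α : Type*} [Fintype α] (Δ : Finset (Finset α))
    (hdisj : ∀ δ₁ ∈ Δ, ∀ δ₂ ∈ Δ, δ₁ ≠ δ₂ → Disjoint δ₁ δ₂) (hcov : ∀ a : α, ∃ δ ∈ Δ, a ∈ δ) :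
    MeasurePreserving (fun (x : α → ℝ) (δ : Δ) => WithLp.toLp 2 fun a : (δ : Finset α) => x a) := by
  have hcurry : MeasurePreserving (fun (x : α → ℝ) (δ : Δ) (a : (δ : Finset α)) => x a)
      volume volume :=
    (measurePreserving_piCurry (κ := fun δ : Δ => (δ : Finset α)) (X := fun _ _ => ℝ)
      fun _ _ => volume).comp
    (measurePreserving_piCongrLeft (fun _ : α => (volume : Measure ℝ))
      (Finset.sigmaEquivOfPartition Δ hdisj hcov)).symm
  exact (measurePreserving_pi _ _ fun δ => PiLp.volume_preserving_toLp _).comp hcurry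

theorem volume_combined_ball_general (n : ℕ) (Δ : Finset (Finset (Fin n)))
    (hdisj : ∀ δ₁ ∈ Δ, ∀ δ₂ ∈ Δ, δ₁ ≠ δ₂ → Disjoint δ₁ δ₂)
    (hcov : ∀ d : Fin n, ∃ δ ∈ Δ, d ∈ δ)
    (r : ℝ) (hr : 0 ≤ r) :
    volume {x : Fin n → ℝ | (∑ δ ∈ Δ, Real.sqrt (∑ d ∈ δ, x d ^ 2)) ≤ r}
      = ENNReal.ofReal (r ^ n / (Nat.factorial n : ℝ) *
          ∏ δ ∈ Δ, ((Nat.factorial δ.card : ℝ) * π ^ ((δ.card : ℝ) / 2) /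
            Real.Gamma ((δ.card : ℝ) / 2 + 1))) := by
  have hset : {x : Fin n → ℝ | (∑ δ ∈ Δ, Real.sqrt (∑ d ∈ δ, x d ^ 2)) ≤ r} =
      (fun x (δ : Δ) => WithLp.toLp 2 fun d : (δ : Finset (Fin n)) => x d) ⁻¹'
        {y | ∑ δ, ‖y δ‖ ≤ r} := by
    ext x
    simp only [Set.mem_ofPred_eq, Set.mem_preimage, EuclideanSpace.norm_eq, Real.norm_eq_abs,
      sq_abs]
    rw [← Finset.sum_coe_sort Δ]
    congr! 3 with δ
    exact (Finset.sum_coe_sort _ _).symm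
  have hdim : ∑ δ : Δ, finrank ℝ (EuclideanSpace ℝ (δ : Finset (Fin n))) = n := by
    simpa [finrank_euclideanSpace] using
      Fintype.card_congr (Finset.sigmaEquivOfPartition Δ hdisj hcov)
  rw [hset, (measurePreserving_restrictBlocks Δ hdisj hcov).measure_preimage
      (measurableSet_le (by fun_prop) (by fun_prop)).nullMeasurableSet,
    volume_setOf_sum_norm_le hr, hdim]
  simp_rw [EuclideanSpace.integral_exp_neg_norm]
  rw [← Finset.prod_coe_sort Δ]
  simp

/-- Volume of the hyperball of radius r under the unweighted combined metric. -/
theorem volume_combined_ball (n : ℕ) (Δ : Finset (Finset (Fin n)))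
    (hne : ∀ δ ∈ Δ, δ.Nonempty)
    (hdisj : ∀ δ₁ ∈ Δ, ∀ δ₂ ∈ Δ, δ₁ ≠ δ₂ → Disjoint δ₁ δ₂)
    (hcov : ∀ d : Fin n, ∃ δ ∈ Δ, d ∈ δ)
    (r : ℝ) (hr : 0 ≤ r) :
    volume {x : Fin n → ℝ | (∑ δ ∈ Δ, Real.sqrt (∑ d ∈ δ, x d ^ 2)) ≤ r}
      = ENNReal.ofReal (r ^ n / (Nat.factorial n : ℝ) *
          ∏ δ ∈ Δ, ((Nat.factorial δ.card : ℝ) * π ^ ((δ.card : ℝ) / 2) /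
            Real.Gamma ((δ.card : ℝ) / 2 + 1))) :=
  volume_combined_ball_general n Δ hdisj hcov r hr
end
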